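/- arXiv:1301.1493 — 2 statements merged into one kernel-verified Lean document; each statement's English description precedes it below -/
import Mathlib

section
/- For any G ∈ 𝒢, π₀ ∈ Π, and g ∈ S_n, the search tree satisfies 𝒯(G^g, π₀^g) = 𝒯(G,π₀)^g; that is, ν is a node of 𝒯(G,π₀) if and only if ν^g is a node of 𝒯(G^g,π₀^g). -/
/-- Relabelling action of a permutation on a graph: `v^g` adjacent to `w^g` iff `v` adjacent `w`. -/
def gactG {n : ℕ} (g : Equiv.Perm (Fin n)) (G : SimpleGraph (Fin n)) : SimpleGraph (Fin n) where
  Adj v w := G.Adj (g⁻¹ v) (g⁻¹ w)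
  symm := ⟨fun _ _ h => G.adj_symm h⟩
  loopless := ⟨fun _ h => G.irrefl h⟩

/-- Relabelling action of a permutation on a colouring. -/
def gactC {n : ℕ} (g : Equiv.Perm (Fin n)) (π : Fin n → ℕ) : Fin n → ℕ :=
  fun v => π (g⁻¹ v)

/-- A colouring of `V`: a function surjective onto `{1,…,k}` for some `k`. -/
def IsCol {n : ℕ} (π : Fin n → ℕ) : Prop := ∃ k, Set.range π = Set.Icc 1 k

/-- `π'` is finer than or equal to `π`. -/
def FinerC {n : ℕ} (π' π : Fin n → ℕ) : Prop := ∀ v w, π v < π w → π' v < π' w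

/-- Nodes of the search tree with child rule given by the target cells `Tc`. -/
inductive IsTNode {n : ℕ} (Tc : List (Fin n) → Set (Fin n)) : List (Fin n) → Prop
  | root : IsTNode Tc []
  | child {ν : List (Fin n)} {w : Fin n} :
      IsTNode Tc ν → w ∈ Tc ν → IsTNode Tc (ν ++ [w])

/-- The labelled graph `G^π` for a (discrete) colouring `π`, as a set of labelled edges. -/
def relabelSet {n : ℕ} (G : SimpleGraph (Fin n)) (π : Fin n → ℕ) : Set (ℕ × ℕ) :=
  {p | ∃ v w, G.Adj v w ∧ π v = p.1 ∧ π w = p.2}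

/-- Equitable colouring: same-coloured vertices have equally many neighbours of each colour. -/
def IsEquit {n : ℕ} (G : SimpleGraph (Fin n)) (π : Fin n → ℕ) : Prop :=
  ∀ v w, π v = π w → ∀ j,
    {u | G.Adj v u ∧ π u = j}.ncard = {u | G.Adj w u ∧ π u = j}.ncard

namespace IsTNode

variable {n : ℕ} {Tc Tc' : List (Fin n) → Set (Fin n)}

theorem map {f : Fin n → Fin n} (hf : ∀ ν, ∀ w ∈ Tc ν, f w ∈ Tc' (ν.map f)) {ν : List (Fin n)}
    (h : IsTNode Tc ν) : IsTNode Tc' (ν.map f) := by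
  induction h with
  | root => exact root
  | child _ hw ih => simpa only [List.map_append, List.map_singleton] using child ih (hf _ _ hw)

theorem map_iff_of_image_eq (g : Equiv.Perm (Fin n)) (hTc : ∀ ν, Tc' (ν.map g) = g '' Tc ν)
    (ν : List (Fin n)) : IsTNode Tc ν ↔ IsTNode Tc' (ν.map g) := by
  refine ⟨map fun μ w hw => hTc μ ▸ Set.mem_image_of_mem g hw, fun h => ?_⟩
  have hTc_inv : ∀ μ, ∀ w ∈ Tc' μ, g⁻¹ w ∈ Tc (μ.map ⇑g⁻¹) := by
    intro μ w hw
    have hμ : (μ.map ⇑g⁻¹).map g = μ := by simp [List.map_map, Function.comp_def]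
    rw [← hμ, hTc] at hw
    obtain ⟨x, hx, rfl⟩ := hw
    simpa using hx
  simpa [List.map_map, Function.comp_def] using map hTc_inv h

end IsTNode

theorem stmt7_general {n : ℕ}
    (T : SimpleGraph (Fin n) → (Fin n → ℕ) → List (Fin n) → Set (Fin n))
    (hT3 : ∀ G π ν (g : Equiv.Perm (Fin n)),
      T (gactG g G) (gactC g π) (ν.map g) = g '' (T G π ν))
    (G : SimpleGraph (Fin n)) (π₀ : Fin n → ℕ) (g : Equiv.Perm (Fin n)) :
    ∀ ν : List (Fin n),
      IsTNode (T G π₀) ν ↔ IsTNode (T (gactG g G) (gactC g π₀)) (ν.map g) :=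
  IsTNode.map_iff_of_image_eq g (hT3 G π₀ · g)

/-- The search tree satisfies 𝒯(G^g,π₀^g) = 𝒯(G,π₀)^g. -/
theorem stmt7 {n : ℕ}
    (R : SimpleGraph (Fin n) → (Fin n → ℕ) → List (Fin n) → (Fin n → ℕ))
    (T : SimpleGraph (Fin n) → (Fin n → ℕ) → List (Fin n) → Set (Fin n))
    (hR1 : ∀ G π ν, FinerC (R G π ν) π)
    (hR2 : ∀ G π ν, ∀ v ∈ ν, (R G π ν) ⁻¹' {R G π ν v} = {v})
    (hR3 : ∀ G π ν (g : Equiv.Perm (Fin n)),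
      R (gactG g G) (gactC g π) (ν.map g) = gactC g (R G π ν))
    (hT1 : ∀ G π ν, Function.Injective (R G π ν) → T G π ν = ∅)
    (hT2 : ∀ G π ν, ¬ Function.Injective (R G π ν) →
      ∃ j, T G π ν = (R G π ν) ⁻¹' {j} ∧ ∃ v w, v ∈ T G π ν ∧ w ∈ T G π ν ∧ v ≠ w)
    (hT3 : ∀ G π ν (g : Equiv.Perm (Fin n)),
      T (gactG g G) (gactC g π) (ν.map g) = g '' (T G π ν))
    (G : SimpleGraph (Fin n)) (π₀ : Fin n → ℕ) (g : Equiv.Perm (Fin n)) :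
    ∀ ν : List (Fin n),
      IsTNode (T G π₀) ν ↔ IsTNode (T (gactG g G) (gactC g π₀)) (ν.map g) :=
  stmt7_general T hT3 G π₀ g
end

section
/- Let ν be a node of the search tree 𝒯(G,π₀) and let π = R(G,π₀,ν). Then Aut(G,π) equals the point-wise stabilizer of the sequence ν in Aut(G,π₀); that is, Aut(G,π) = { g ∈ Aut(G,π₀) : v^g = v for every vertex v occurring in ν }. -/
/-! A permutation fixing `ν` pointwise fixes the node `ν`, so by equivariance (R3) it carries
`R(G,π₀,ν)` to `R(G^g,π₀^g,ν)`; for `g ∈ Aut(G,π₀)` this is `R(G,π₀,ν)` itself. Conversely, an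
automorphism of the finer colouring `R(G,π₀,ν)` preserves the coarser `π₀` (R1) and must fix every
vertex of `ν`, whose cells are singletons (R2). -/

theorem FinerC.eq_of_eq {n : ℕ} {π' π : Fin n → ℕ} (h : FinerC π' π) {v w : Fin n}
    (hvw : π' v = π' w) : π v = π w :=
  le_antisymm (not_lt.1 fun hlt => (h w v hlt).ne' hvw) (not_lt.1 fun hlt => (h v w hlt).ne hvw)

theorem gactC_eq_self_of_finerC {n : ℕ} {π' π : Fin n → ℕ} (h : FinerC π' π)
    {g : Equiv.Perm (Fin n)} (hg : gactC g π' = π') : gactC g π = π :=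
  funext fun v => h.eq_of_eq (congrFun hg v)

theorem apply_eq_self_of_singleton_cell {n : ℕ} {π : Fin n → ℕ} {g : Equiv.Perm (Fin n)}
    (hg : gactC g π = π) {v : Fin n} (hv : π ⁻¹' {π v} = {v}) : g v = v := by
  have hcell : g⁻¹ v ∈ π ⁻¹' {π v} := congrFun hg v
  rw [hv] at hcell
  exact (Equiv.Perm.inv_eq_iff_eq.1 hcell).symm

theorem stmt9_general {n : ℕ}
    (R : SimpleGraph (Fin n) → (Fin n → ℕ) → List (Fin n) → (Fin n → ℕ))
    (hR1 : ∀ G π ν, FinerC (R G π ν) π)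
    (hR2 : ∀ G π ν, ∀ v ∈ ν, (R G π ν) ⁻¹' {R G π ν v} = {v})
    (hR3 : ∀ G π ν (g : Equiv.Perm (Fin n)),
      R (gactG g G) (gactC g π) (ν.map g) = gactC g (R G π ν))
    (G : SimpleGraph (Fin n)) (π₀ : Fin n → ℕ)
    (ν : List (Fin n)) :
    ∀ g : Equiv.Perm (Fin n),
      (gactG g G = G ∧ gactC g (R G π₀ ν) = R G π₀ ν) ↔
      ((gactG g G = G ∧ gactC g π₀ = π₀) ∧ ∀ v ∈ ν, g v = v) := by
  intro g
  constructor
  · rintro ⟨hG, hC⟩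
    exact ⟨⟨hG, gactC_eq_self_of_finerC (hR1 G π₀ ν) hC⟩,
      fun v hv => apply_eq_self_of_singleton_cell hC (hR2 G π₀ ν v hv)⟩
  · rintro ⟨⟨hG, hC⟩, hfix⟩
    have hν : ν.map g = ν := (List.map_congr_left hfix).trans (List.map_id ν)
    refine ⟨hG, ?_⟩
    simpa only [hν, hG, hC] using (hR3 G π₀ ν g).symm

/-- Aut(G,π) is the point-wise stabilizer of ν in Aut(G,π₀), where π = R(G,π₀,ν). -/
theorem stmt9 {n : ℕ}
    (R : SimpleGraph (Fin n) → (Fin n → ℕ) → List (Fin n) → (Fin n → ℕ))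
    (T : SimpleGraph (Fin n) → (Fin n → ℕ) → List (Fin n) → Set (Fin n))
    (hR1 : ∀ G π ν, FinerC (R G π ν) π)
    (hR2 : ∀ G π ν, ∀ v ∈ ν, (R G π ν) ⁻¹' {R G π ν v} = {v})
    (hR3 : ∀ G π ν (g : Equiv.Perm (Fin n)),
      R (gactG g G) (gactC g π) (ν.map g) = gactC g (R G π ν))
    (hT1 : ∀ G π ν, Function.Injective (R G π ν) → T G π ν = ∅)
    (hT2 : ∀ G π ν, ¬ Function.Injective (R G π ν) →
      ∃ j, T G π ν = (R G π ν) ⁻¹' {j} ∧ ∃ v w, v ∈ T G π ν ∧ w ∈ T G π ν ∧ v ≠ w)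
    (hT3 : ∀ G π ν (g : Equiv.Perm (Fin n)),
      T (gactG g G) (gactC g π) (ν.map g) = g '' (T G π ν))
    (G : SimpleGraph (Fin n)) (π₀ : Fin n → ℕ)
    (ν : List (Fin n)) (hν : IsTNode (T G π₀) ν) :
    ∀ g : Equiv.Perm (Fin n),
      (gactG g G = G ∧ gactC g (R G π₀ ν) = R G π₀ ν) ↔
      ((gactG g G = G ∧ gactC g π₀ = π₀) ∧ ∀ v ∈ ν, g v = v) :=
  stmt9_general R hR1 hR2 hR3 G π₀ ν
end
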